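/- arXiv:1804.08398 — 2 statements merged into one kernel-verified Lean document; each statement's English description precedes it below -/
import Mathlib

section
/- If u is a function of class C^{2s} (smooth enough so that (-Δ)^s u(x) is defined pointwise), then for every x ∈ ℝⁿ one has (-Δ)^s u₊(x) ≤ sign₊(u(x)) · (-Δ)^s u(x), where u₊ = max(u,0) and sign₊(t) = 1 if t ≥ 0 and 0 if t < 0. -/
open MeasureTheory Metric Filter

/-- Pointwise Kato inequality for the positive part. If the principal value
integrals defining `(-Δ)^s u (x) = Lu` and `(-Δ)^s u₊ (x) = Lp` converge (as limits of the
truncated integrals over `{y : ε ≤ dist x y}` as `ε → 0⁺`, each truncation being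
integrable), then `Lp ≤ sign₊(u x) · Lu`, where `sign₊ t = 1` if `t ≥ 0` and `0` if
`t < 0`. -/
theorem kato_pointwise_posPart
    (n : ℕ) (hn : 1 ≤ n) (s : ℝ) (hs : 0 < s) (hs1 : s < 1)
    (cns : ℝ) (hcns : 0 < cns)
    (u : EuclideanSpace ℝ (Fin n) → ℝ) (x : EuclideanSpace ℝ (Fin n))
    (Lu Lp : ℝ)
    (hint : ∀ ε : ℝ, 0 < ε →
      IntegrableOn (fun y => (u x - u y) / ‖x - y‖ ^ ((n : ℝ) + 2 * s))
        {y | ε ≤ dist x y})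
    (hintp : ∀ ε : ℝ, 0 < ε →
      IntegrableOn (fun y => (max (u x) 0 - max (u y) 0) / ‖x - y‖ ^ ((n : ℝ) + 2 * s))
        {y | ε ≤ dist x y})
    (hLu : Tendsto
      (fun ε : ℝ => cns * ∫ y in {y | ε ≤ dist x y},
        (u x - u y) / ‖x - y‖ ^ ((n : ℝ) + 2 * s))
      (nhdsWithin 0 (Set.Ioi 0)) (nhds Lu))
    (hLp : Tendsto
      (fun ε : ℝ => cns * ∫ y in {y | ε ≤ dist x y},
        (max (u x) 0 - max (u y) 0) / ‖x - y‖ ^ ((n : ℝ) + 2 * s))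
      (nhdsWithin 0 (Set.Ioi 0)) (nhds Lp)) :
    Lp ≤ (if 0 ≤ u x then (1 : ℝ) else 0) * Lu := by

  have hmeas : ∀ ε : ℝ, MeasurableSet {y : EuclideanSpace ℝ (Fin n) | ε ≤ dist x y} := by
    intro ε
    exact isClosed_le continuous_const (continuous_const.dist continuous_id) |>.measurableSet
  have hbot : (nhdsWithin (0:ℝ) (Set.Ioi 0)).NeBot := by
    exact nhdsGT_neBot 0
  by_cases hux : 0 ≤ u x
  · simp only [hux, if_true, one_mul]
    refine le_of_tendsto_of_tendsto hLp hLu ?_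
    filter_upwards [self_mem_nhdsWithin] with ε (hε : 0 < ε)
    refine mul_le_mul_of_nonneg_left ?_ hcns.le
    refine setIntegral_mono_on (hintp ε hε) (hint ε hε) (hmeas ε) ?_
    intro y hy
    have hd : (0:ℝ) < ‖x - y‖ := by
      have : ε ≤ dist x y := hy
      rw [dist_eq_norm] at this
      linarith
    have hpow : (0:ℝ) < ‖x - y‖ ^ ((n : ℝ) + 2 * s) := by
      positivity
    apply div_le_div_of_nonneg_right ?_ hpow.le
    have h1 : max (u x) 0 = u x := max_eq_left hux
    have h2 : u y ≤ max (u y) 0 := le_max_left _ _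
    linarith
  · simp only [hux, if_false, zero_mul]
    refine le_of_tendsto hLp ?_
    filter_upwards [self_mem_nhdsWithin] with ε (hε : 0 < ε)
    have : (∫ y in {y | ε ≤ dist x y},
        (max (u x) 0 - max (u y) 0) / ‖x - y‖ ^ ((n : ℝ) + 2 * s)) ≤ 0 := by
      apply setIntegral_nonpos (hmeas ε)
      intro y _
      apply div_nonpos_of_nonpos_of_nonneg
      · have h1 : max (u x) 0 = 0 := max_eq_right (le_of_not_ge hux)
        have h2 : (0:ℝ) ≤ max (u y) 0 := le_max_right _ _
        linarith
      · positivity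
    nlinarith
end

section
/- Singular infinite-well localization, exterior vanishing: let u_k ≥ 0 satisfy ∫_{ℝⁿ} u_k (-Δ)^s φ₀ + ∫_{ℝⁿ} V_k u_k φ₀ = ∫_Ω f φ₀ where φ₀ > 0 on ℝⁿ satisfies (-Δ)^s φ₀ = 1, and V_k ≥ k on Ω^c, V_k ≥ 0. Then (1 + k·inf_{Ω^c} φ₀) ∫_{Ω^c} u_k ≤ ∫_Ω f φ₀; consequently, if inf_{Ω^c} φ₀ > 0 and u_k → u pointwise a.e. with u_k ≥ 0, then u = 0 a.e. in Ω^c. -/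
/-!
Testing the equation against `φ₀`, with `(-Δ)^s φ₀ = 1`, gives
`∫ u_k + ∫ V_k u_k φ₀ = ∫_Ω f φ₀`. Both integrands are nonnegative and on `Ωᶜ` the second one
dominates `k m u_k`, so the mass of `u_k` outside `Ω` is `O(1/k)`. Fatou's lemma passes this to
the a.e. limit, which is nonnegative and has zero integral on `Ωᶜ`.
-/

open MeasureTheory Filter Topology

variable {α : Type*} [MeasurableSpace α] {μ : Measure α}

theorem mul_setIntegral_le_integral_of_mul_le {S : Set α} (hS : MeasurableSet S)
    {g w : α → ℝ} {c : ℝ} (hg : Integrable g μ) (hw : Integrable w μ) (hw0 : 0 ≤ᵐ[μ] w)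
    (hgw : ∀ x ∈ S, c * g x ≤ w x) :
    c * ∫ x in S, g x ∂μ ≤ ∫ x, w x ∂μ :=
  calc c * ∫ x in S, g x ∂μ = ∫ x in S, c * g x ∂μ := (integral_const_mul c g).symm
    _ ≤ ∫ x in S, w x ∂μ :=
      setIntegral_mono_on (hg.const_mul c).integrableOn hw.integrableOn hS hgw
    _ ≤ ∫ x, w x ∂μ := setIntegral_le_integral hw hw0

theorem one_add_mul_setIntegral_le_integral_add {S : Set α} (hS : MeasurableSet S)
    {u V φ : α → ℝ} {k m : ℝ} (hk : 0 ≤ k) (hm : 0 ≤ m)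
    (hVS : ∀ x ∈ S, k ≤ V x) (hφS : ∀ x ∈ S, m ≤ φ x) (hu : ∀ x, 0 ≤ u x)
    (hVuφ : ∀ x, 0 ≤ V x * u x * φ x)
    (hu_int : Integrable u μ) (hVuφ_int : Integrable (fun x => V x * u x * φ x) μ) :
    (1 + k * m) * ∫ x in S, u x ∂μ ≤ ∫ x, u x ∂μ + ∫ x, V x * u x * φ x ∂μ := by
  have h_mass : ∫ x in S, u x ∂μ ≤ ∫ x, u x ∂μ :=
    setIntegral_le_integral hu_int (ae_of_all _ hu)
  have h_well : k * m * ∫ x in S, u x ∂μ ≤ ∫ x, V x * u x * φ x ∂μ := by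
    refine mul_setIntegral_le_integral_of_mul_le hS hu_int hVuφ_int (ae_of_all _ hVuφ)
      fun x hx => ?_
    have hkm : k * m ≤ V x * φ x := mul_le_mul (hVS x hx) (hφS x hx) hm (hk.trans (hVS x hx))
    nlinarith [hu x]
  linarith

theorem ae_eq_zero_of_tendsto_of_integral_le {u : ℕ → α → ℝ} {w : α → ℝ} {b : ℕ → ℝ}
    (hu : ∀ k, 0 ≤ᵐ[μ] u k) (hu_int : ∀ k, Integrable (u k) μ)
    (hle : ∀ k, ∫ x, u k x ∂μ ≤ b k) (hb : Tendsto b atTop (𝓝 0))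
    (hw : ∀ᵐ x ∂μ, Tendsto (fun k => u k x) atTop (𝓝 (w x))) :
    w =ᵐ[μ] 0 := by
  have hw_meas : AEMeasurable w μ :=
    aemeasurable_of_tendsto_metrizable_ae atTop (fun k => (hu_int k).aemeasurable) hw
  have hw_nonneg : 0 ≤ᵐ[μ] w := by
    filter_upwards [ae_all_iff.mpr hu, hw] with x hux hx
    exact ge_of_tendsto' hx hux
  have h_lintegral_le : ∀ k, ∫⁻ x, ENNReal.ofReal (u k x) ∂μ ≤ ENNReal.ofReal (b k) := by
    intro k
    rw [← ofReal_integral_eq_lintegral_ofReal (hu_int k) (hu k)]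
    exact ENNReal.ofReal_le_ofReal (hle k)
  have h_lintegral_zero : ∫⁻ x, ENNReal.ofReal (w x) ∂μ = 0 := by
    refine le_antisymm ?_ zero_le
    calc ∫⁻ x, ENNReal.ofReal (w x) ∂μ
        = ∫⁻ x, liminf (fun k => ENNReal.ofReal (u k x)) atTop ∂μ := by
          refine lintegral_congr_ae ?_
          filter_upwards [hw] with x hx
          exact ((ENNReal.continuous_ofReal.tendsto _).comp hx).liminf_eq.symm
      _ ≤ liminf (fun k => ∫⁻ x, ENNReal.ofReal (u k x) ∂μ) atTop :=
          lintegral_liminf_le' fun k => (hu_int k).aemeasurable.ennreal_ofReal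
      _ ≤ liminf (fun k => ENNReal.ofReal (b k)) atTop :=
          liminf_le_liminf (Eventually.of_forall h_lintegral_le)
      _ = 0 := by
          simpa using (ENNReal.tendsto_ofReal hb).liminf_eq
  have hw_nonpos : ∀ᵐ x ∂μ, ENNReal.ofReal (w x) = 0 :=
    (lintegral_eq_zero_iff' hw_meas.ennreal_ofReal).mp h_lintegral_zero
  filter_upwards [hw_nonneg, hw_nonpos] with x h0 h1
  exact le_antisymm (ENNReal.ofReal_eq_zero.mp h1) h0

theorem tendsto_div_one_add_natCast_mul_atTop_zero (C : ℝ) {m : ℝ} (hm : 0 < m) :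
    Tendsto (fun k : ℕ => C / (1 + k * m)) atTop (𝓝 0) :=
  tendsto_const_nhds.div_atTop <|
    tendsto_atTop_add_const_left _ 1 (tendsto_natCast_atTop_atTop.atTop_mul_const hm)

theorem infinite_well_exterior_vanishing_general
    (n : ℕ)
    (Ω : Set (EuclideanSpace ℝ (Fin n))) (hΩm : MeasurableSet Ω)
    (f φ₀ Lφ₀ : EuclideanSpace ℝ (Fin n) → ℝ)
    (hφ₀pos : ∀ x, 0 < φ₀ x) (hLφ₀ : ∀ x, Lφ₀ x = 1)
    (m : ℝ) (hm : 0 < m) (hminf : ∀ x ∈ Ωᶜ, m ≤ φ₀ x)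
    (V : ℕ → EuclideanSpace ℝ (Fin n) → ℝ)
    (hV : ∀ k x, 0 ≤ V k x) (hVk : ∀ k : ℕ, ∀ x ∈ Ωᶜ, (k : ℝ) ≤ V k x)
    (u : ℕ → EuclideanSpace ℝ (Fin n) → ℝ)
    (hu : ∀ k x, 0 ≤ u k x)
    (huint : ∀ k, Integrable (u k))
    (hVuint : ∀ k, Integrable (fun x => V k x * u k x * φ₀ x))
    (hid : ∀ k, (∫ x, u k x * Lφ₀ x) + (∫ x, V k x * u k x * φ₀ x) =
      ∫ x in Ω, f x * φ₀ x) :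
    (∀ k : ℕ, (1 + (k : ℝ) * m) * (∫ x in Ωᶜ, u k x) ≤ ∫ x in Ω, f x * φ₀ x) ∧
    (∀ w : EuclideanSpace ℝ (Fin n) → ℝ,
      (∀ᵐ x, Tendsto (fun k => u k x) atTop (nhds (w x))) →
      ∀ᵐ x, x ∈ Ωᶜ → w x = 0) := by
  have h_bound (k : ℕ) : (1 + (k : ℝ) * m) * (∫ x in Ωᶜ, u k x) ≤ ∫ x in Ω, f x * φ₀ x := by
    have hVuφ x : 0 ≤ V k x * u k x * φ₀ x :=
      mul_nonneg (mul_nonneg (hV k x) (hu k x)) (hφ₀pos x).le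
    have h := one_add_mul_setIntegral_le_integral_add hΩm.compl k.cast_nonneg hm.le (hVk k)
      hminf (hu k) hVuφ (huint k) (hVuint k)
    simpa only [← hid k, hLφ₀, mul_one] using h
  have h_exterior (k : ℕ) :
      ∫ x in Ωᶜ, u k x ≤ (∫ x in Ω, f x * φ₀ x) / (1 + (k : ℝ) * m) := by
    rw [le_div_iff₀ (by positivity), mul_comm]
    exact h_bound k
  refine ⟨h_bound, fun w hw => (ae_restrict_iff' hΩm.compl).mp ?_⟩
  exact ae_eq_zero_of_tendsto_of_integral_le (fun k => ae_of_all _ (hu k))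
    (fun k => (huint k).restrict) h_exterior (tendsto_div_one_add_natCast_mul_atTop_zero _ hm)
    (ae_restrict_of_ae hw)

/-- Singular infinite-well localization, exterior vanishing. Let `u_k ≥ 0`
satisfy `∫ u_k (-Δ)^s φ₀ + ∫ V_k u_k φ₀ = ∫_Ω f φ₀` where `φ₀ > 0` satisfies
`(-Δ)^s φ₀ = 1` (recorded by `Lφ₀`), `V_k ≥ 0` everywhere and `V_k ≥ k` on `Ωᶜ`. Then
`(1 + k·m) ∫_{Ωᶜ} u_k ≤ ∫_Ω f φ₀` where `m = inf_{Ωᶜ} φ₀`; consequently, if `m > 0` and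
`u_k → w` pointwise a.e., then `w = 0` a.e. in `Ωᶜ`. -/
theorem infinite_well_exterior_vanishing
    (n : ℕ) (hn : 1 ≤ n) (s : ℝ) (hs : 0 < s) (hs1 : s < 1)
    (Ω : Set (EuclideanSpace ℝ (Fin n))) (hΩo : IsOpen Ω)
    (hΩb : Bornology.IsBounded Ω) (hΩm : MeasurableSet Ω)
    (f φ₀ Lφ₀ : EuclideanSpace ℝ (Fin n) → ℝ)
    (hf : ∀ x, 0 ≤ f x) (hfbdd : ∃ C : ℝ, ∀ x, f x ≤ C)
    (hfext : ∀ x ∈ Ωᶜ, f x = 0)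
    (hφ₀pos : ∀ x, 0 < φ₀ x) (hLφ₀ : ∀ x, Lφ₀ x = 1)
    (m : ℝ) (hm : 0 < m) (hminf : ∀ x ∈ Ωᶜ, m ≤ φ₀ x)
    (V : ℕ → EuclideanSpace ℝ (Fin n) → ℝ)
    (hV : ∀ k x, 0 ≤ V k x) (hVk : ∀ k : ℕ, ∀ x ∈ Ωᶜ, (k : ℝ) ≤ V k x)
    (u : ℕ → EuclideanSpace ℝ (Fin n) → ℝ)
    (hu : ∀ k x, 0 ≤ u k x)
    (huint : ∀ k, Integrable (u k))
    (hVuint : ∀ k, Integrable (fun x => V k x * u k x * φ₀ x))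
    (hid : ∀ k, (∫ x, u k x * Lφ₀ x) + (∫ x, V k x * u k x * φ₀ x) =
      ∫ x in Ω, f x * φ₀ x) :
    (∀ k : ℕ, (1 + (k : ℝ) * m) * (∫ x in Ωᶜ, u k x) ≤ ∫ x in Ω, f x * φ₀ x) ∧
    (∀ w : EuclideanSpace ℝ (Fin n) → ℝ,
      (∀ᵐ x, Tendsto (fun k => u k x) atTop (nhds (w x))) →
      ∀ᵐ x, x ∈ Ωᶜ → w x = 0) :=
  infinite_well_exterior_vanishing_general n Ω hΩm f φ₀ Lφ₀ hφ₀pos hLφ₀ m hm hminf V hV hVk u hu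
    huint hVuint hid
end
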